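/- arXiv:2404.06800 — 2 statements merged into one kernel-verified Lean document; each statement's English description precedes it below -/
import Mathlib

section
/- Let (B₁,...,B_d) be a splitting of a matrix B_J ∈ ℝ^{n×n}. If λ ≠ 0 is an eigenvalue of the associated iteration matrix 𝓑_{(d)} with eigenvector [α₁; ...; α_d], then α_p ≠ 0 for every p = 1,...,d. -/
/-!
Write `β_q = B_q α_q`, `S_p = ∑_{q<p} β_q` and `T = ∑_q β_q`; the block equations read
`λ α_p = (λ - 1) S_p + T`. If `α_p = 0`, then `S_q` stays equal to `S_p` for `q ≥ p`, so every
later block vanishes as well. Hence `T = S_p`, and equation `p` becomes `λ S_p = 0`, so `T = 0`.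
Now `λ α_q = (λ - 1) S_q`, and the blocks vanish one after another starting from the first.
-/

open Matrix

/-- A splitting of `B`: nonzero parts summing to `B` with pairwise vanishing
Hadamard products. -/
def IsSplitting {n d : ℕ} (B : Matrix (Fin n) (Fin n) ℝ)
    (Bs : Fin d → Matrix (Fin n) (Fin n) ℝ) : Prop :=
  (∀ p, Bs p ≠ 0) ∧ (∑ p, Bs p = B) ∧
    ∀ p q, p ≠ q → Matrix.hadamard (Bs p) (Bs q) = 0

/-- Strictly block-lower-triangular part `𝓛` of the splitting scheme. -/
def blockL {n d : ℕ} (Bs : Fin d → Matrix (Fin n) (Fin n) ℝ) :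
    Matrix (Fin d × Fin n) (Fin d × Fin n) ℝ :=
  Matrix.of fun pi qj => if qj.1 < pi.1 then Bs qj.1 pi.2 qj.2 else 0

/-- Block-upper-triangular part `𝓤` of the splitting scheme. -/
def blockU {n d : ℕ} (Bs : Fin d → Matrix (Fin n) (Fin n) ℝ) :
    Matrix (Fin d × Fin n) (Fin d × Fin n) ℝ :=
  Matrix.of fun pi qj => if pi.1 ≤ qj.1 then Bs qj.1 pi.2 qj.2 else 0

/-- The iteration matrix `𝓑 = (𝓘 - 𝓛)⁻¹ 𝓤` of a splitting. -/
noncomputable def iterMat {n d : ℕ} (Bs : Fin d → Matrix (Fin n) (Fin n) ℝ) :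
    Matrix (Fin d × Fin n) (Fin d × Fin n) ℝ :=
  (1 - blockL Bs)⁻¹ * blockU Bs

/-- Complexification of the iteration matrix. -/
noncomputable def iterMatC {n d : ℕ} (Bs : Fin d → Matrix (Fin n) (Fin n) ℝ) :
    Matrix (Fin d × Fin n) (Fin d × Fin n) ℂ :=
  (iterMat Bs).map Complex.ofReal

/-- Spectral radius of a real matrix, via its complexification. -/
noncomputable def specRad {m : Type*} [Fintype m] [DecidableEq m]
    (M : Matrix m m ℝ) : ENNReal :=
  spectralRadius ℂ (M.map Complex.ofReal)

open Finset

section BlockRecurrence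

variable {K M : Type*} [Field K] [AddCommGroup M] [Module K M] {d : ℕ}
  {lam : K} {α β : Fin d → M}

theorem eq_zero_of_smul_sum_Iio_add_sum_Ici_eq (hlam : lam ≠ 0) (hβ : ∀ q, α q = 0 → β q = 0)
    (heq : ∀ p, lam • ∑ q ∈ Iio p, β q + ∑ q ∈ Ici p, β q = lam • α p)
    {p : Fin d} (hp : α p = 0) : α = 0 := by
  set T := ∑ q, β q with hT_def
  have hsplit : ∀ q, ∑ r ∈ Ici q, β r = T - ∑ r ∈ Iio q, β r := fun q => by
    rw [eq_sub_iff_add_eq, hT_def, ← sum_compl_add_sum (Iio q)]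
    congr 2
    ext r
    simp
  have hrec : ∀ q, lam • α q = (lam - 1) • ∑ r ∈ Iio q, β r + T := fun q => by
    rw [← heq q, hsplit, sub_smul, one_smul]
    abel
  have hfwd : ∀ q, p ≤ q → α q = 0 := fun q => by
    induction q using WellFoundedLT.induction with
    | _ q ih =>
      intro hpq
      have hS : ∑ r ∈ Iio q, β r = ∑ r ∈ Iio p, β r :=
        (sum_subset (Iio_subset_Iio hpq) fun r hrq hrp =>
          hβ r (ih r (mem_Iio.1 hrq) (not_lt.1 (mt mem_Iio.2 hrp)))).symm
      refine (smul_eq_zero.1 ?_).resolve_left hlam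
      rw [hrec, hS, ← hrec, hp, smul_zero]
  have hT : T = ∑ r ∈ Iio p, β r :=
    (sum_subset (subset_univ _) fun r _ hrp =>
      hβ r (hfwd r (not_lt.1 (mt mem_Iio.2 hrp)))).symm
  have hT0 : T = 0 := by
    have hrecp := hrec p
    rw [hp, smul_zero, ← hT, sub_smul, one_smul, sub_add_cancel] at hrecp
    exact (smul_eq_zero.1 hrecp.symm).resolve_left hlam
  funext q
  induction q using WellFoundedLT.induction with
  | _ q ih =>
    refine (smul_eq_zero.1 ?_).resolve_left hlam
    rw [hrec, hT0, sum_eq_zero fun r hr => hβ r (ih r (mem_Iio.1 hr)), smul_zero, add_zero]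

end BlockRecurrence

section IterationMatrix

variable {n d : ℕ} (Bs : Fin d → Matrix (Fin n) (Fin n) ℝ)

theorem det_one_sub_blockL : (1 - blockL Bs).det = 1 := by
  rw [← det_reindex_self toLex, det_of_isLowerTriangular]
  · simp [blockL]
  · intro i j hij
    have hij : i < j := OrderDual.toDual_lt_toDual.1 hij
    have hne : ofLex i ≠ ofLex j := hij.ne
    simp [blockL, one_apply_ne hne, not_lt.2 (Prod.Lex.monotone_fst_ofLex hij.le)]

theorem one_sub_blockL_mul_iterMat : (1 - blockL Bs) * iterMat Bs = blockU Bs := by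
  rw [iterMat, ← mul_assoc, mul_nonsing_inv _ (by simp [det_one_sub_blockL]), one_mul]

theorem blockL_map_mulVec_apply (v : Fin d × Fin n → ℂ) (p : Fin d) (i : Fin n) :
    ((blockL Bs).map Complex.ofReal *ᵥ v) (p, i) =
      (∑ q ∈ Iio p, (Bs q).map Complex.ofReal *ᵥ Function.curry v q) i := by
  rw [← filter_gt_eq_Iio, sum_filter, Finset.sum_apply]
  simp only [mulVec, dotProduct, Fintype.sum_prod_type]
  refine sum_congr rfl fun q _ => ?_
  split_ifs <;> simp [blockL, mulVec, dotProduct, *]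

theorem blockU_map_mulVec_apply (v : Fin d × Fin n → ℂ) (p : Fin d) (i : Fin n) :
    ((blockU Bs).map Complex.ofReal *ᵥ v) (p, i) =
      (∑ q ∈ Ici p, (Bs q).map Complex.ofReal *ᵥ Function.curry v q) i := by
  rw [← filter_le_eq_Ici, sum_filter, Finset.sum_apply]
  simp only [mulVec, dotProduct, Fintype.sum_prod_type]
  refine sum_congr rfl fun q _ => ?_
  split_ifs <;> simp [blockU, mulVec, dotProduct, *]

theorem smul_sum_Iio_add_sum_Ici_eq_of_iterMatC_mulVec_eq {lam : ℂ} {v : Fin d × Fin n → ℂ}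
    (heig : iterMatC Bs *ᵥ v = lam • v) (p : Fin d) :
    lam • ∑ q ∈ Iio p, (Bs q).map Complex.ofReal *ᵥ Function.curry v q +
      ∑ q ∈ Ici p, (Bs q).map Complex.ofReal *ᵥ Function.curry v q =
        lam • Function.curry v p := by
  have hmul : (1 - blockL Bs).map Complex.ofReal * iterMatC Bs =
      (blockU Bs).map Complex.ofReal := by
    rw [iterMatC, ← one_sub_blockL_mul_iterMat]
    exact (Matrix.map_mul (f := Complex.ofRealHom)).symm
  have hv : (1 - blockL Bs).map Complex.ofReal *ᵥ (lam • v) =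
      (blockU Bs).map Complex.ofReal *ᵥ v := by
    rw [← heig, mulVec_mulVec, hmul]
  rw [Matrix.map_sub _ (by simp), Matrix.map_one _ (by simp) (by simp), sub_mulVec, one_mulVec]
    at hv
  ext i
  have hi := congrFun hv (p, i)
  simp only [Pi.sub_apply, mulVec_smul, Pi.smul_apply, blockL_map_mulVec_apply,
    blockU_map_mulVec_apply] at hi
  rw [Pi.add_apply, ← hi]
  simp

end IterationMatrix

theorem eigenvector_blocks_nonzero_general (n d : ℕ)
    (Bs : Fin d → Matrix (Fin n) (Fin n) ℝ)
    (lam : ℂ) (hlam : lam ≠ 0)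
    (v : Fin d × Fin n → ℂ) (hv : v ≠ 0)
    (heig : (iterMatC Bs).mulVec v = lam • v) :
    ∀ p : Fin d, (fun i => v (p, i)) ≠ 0 := by
  intro p hp
  have hblocks : Function.curry v = 0 :=
    eq_zero_of_smul_sum_Iio_add_sum_Ici_eq hlam (fun q hq => by rw [hq, mulVec_zero])
      (smul_sum_Iio_add_sum_Ici_eq_of_iterMatC_mulVec_eq Bs heig) (p := p) hp
  exact hv (funext fun qj => congrFun (congrFun hblocks qj.1) qj.2)

/-- Every block of an eigenvector of the iteration matrix of a splitting,
associated with a nonzero eigenvalue, is nonzero. -/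
theorem eigenvector_blocks_nonzero (n d : ℕ) (BJ : Matrix (Fin n) (Fin n) ℝ)
    (Bs : Fin d → Matrix (Fin n) (Fin n) ℝ)
    (hsplit : IsSplitting BJ Bs)
    (lam : ℂ) (hlam : lam ≠ 0)
    (v : Fin d × Fin n → ℂ) (hv : v ≠ 0)
    (heig : (iterMatC Bs).mulVec v = lam • v) :
    ∀ p : Fin d, (fun i => v (p, i)) ≠ 0 :=
  eigenvector_blocks_nonzero_general n d Bs lam hlam v hv heig
end

section
/- Let (B₁,...,B_d) and (B'₁,...,B'_{d+1}) be splittings of B_J with B'_p = B_p for p = 1,...,d-1, with {B'_d, B'_{d+1}} a splitting of B_d, and with B'_{d+1}B'_d = O (ordinary matrix product). Then the iteration matrices of the two splitting schemes have exactly the same nonzero eigenvalues. -/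
open Matrix

section Aux

open Finset

variable {n d : ℕ}

/-- Partial products `Q k = (1+μ C_{k-1}) ⋯ (1+μ C_0)`. -/
noncomputable def Qm (μ : ℂ) (C : ℕ → Matrix (Fin n) (Fin n) ℂ) : ℕ → Matrix (Fin n) (Fin n) ℂ
  | 0 => 1
  | k + 1 => (1 + μ • C k) * Qm μ C k

/-- `T = ∑_{k<d} C k * Q k`. -/
noncomputable def Tm (μ : ℂ) (C : ℕ → Matrix (Fin n) (Fin n) ℂ) (d : ℕ) :
    Matrix (Fin n) (Fin n) ℂ :=
  ∑ k ∈ Finset.range d, C k * Qm μ C k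

/-- Complexified parts, padded by zero. -/
noncomputable def padC {n d : ℕ} (Bs : Fin d → Matrix (Fin n) (Fin n) ℝ) (k : ℕ) :
    Matrix (Fin n) (Fin n) ℂ :=
  if h : k < d then (Bs ⟨k, h⟩).map Complex.ofReal else 0

/-- The block eigen-system. -/
def SysSol (lam : ℂ) (C : ℕ → Matrix (Fin n) (Fin n) ℂ) (d : ℕ) (a : ℕ → Fin n → ℂ) : Prop :=
  ∀ k < d, lam • a k =
    lam • ∑ j ∈ Finset.range k, C j *ᵥ a j + ∑ j ∈ Finset.Ico k d, C j *ᵥ a j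

lemma sum_mulVec {m : Type*} {ι : Type*} [Fintype m] (s : Finset ι)
    (f : ι → Matrix m m ℂ) (x : m → ℂ) :
    (∑ k ∈ s, f k) *ᵥ x = ∑ k ∈ s, f k *ᵥ x := by
  ext i
  simp only [mulVec, dotProduct, Matrix.sum_apply, Finset.sum_apply, Finset.sum_mul]
  rw [Finset.sum_comm]

lemma blockL_pow_entry (Bs : Fin d → Matrix (Fin n) (Fin n) ℝ) :
    ∀ k (pi qj : Fin d × Fin n), ((blockL Bs) ^ k) pi qj ≠ 0 → (qj.1 : ℕ) + k ≤ (pi.1 : ℕ) := by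
  intro k
  induction k with
  | zero =>
    intro pi qj h
    rcases eq_or_ne pi qj with rfl | hne
    · omega
    · rw [pow_zero] at h
      exact absurd (Matrix.one_apply_ne hne) h
  | succ k ih =>
    intro pi qj h
    rw [pow_succ, Matrix.mul_apply] at h
    obtain ⟨r, -, hr⟩ := Finset.exists_ne_zero_of_sum_ne_zero h
    have h1 : ((blockL Bs) ^ k) pi r ≠ 0 := left_ne_zero_of_mul hr
    have h2 : blockL Bs r qj ≠ 0 := right_ne_zero_of_mul hr
    have hlt : (qj.1 : ℕ) < (r.1 : ℕ) := by
      by_contra hc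
      apply h2
      have hn : ¬ (qj.1 < r.1) := by rw [Fin.lt_def]; exact hc
      simp only [blockL, Matrix.of_apply]
      exact if_neg hn
    have := ih pi r h1
    omega

lemma blockL_nilpotent (Bs : Fin d → Matrix (Fin n) (Fin n) ℝ) :
    IsNilpotent (blockL Bs) := by
  refine ⟨d, ?_⟩
  ext pi qj
  by_contra h
  have := blockL_pow_entry Bs d pi qj h
  have := pi.1.isLt
  omega

lemma isUnit_one_sub_blockL (Bs : Fin d → Matrix (Fin n) (Fin n) ℝ) :
    IsUnit (1 - blockL Bs) :=
  IsNilpotent.isUnit_one_sub (blockL_nilpotent Bs)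

lemma isUnit_one_sub_blockLC (Bs : Fin d → Matrix (Fin n) (Fin n) ℝ) :
    IsUnit (1 - (blockL Bs).map Complex.ofReal) := by
  apply IsNilpotent.isUnit_one_sub
  obtain ⟨k, hk⟩ := blockL_nilpotent Bs
  refine ⟨k, ?_⟩
  have h5 := map_pow (Complex.ofRealHom.mapMatrix) (blockL Bs) k
  simp only [RingHom.mapMatrix_apply] at h5
  rw [show Complex.ofReal = ⇑Complex.ofRealHom from rfl, ← h5, hk]
  ext pi qj
  simp [Matrix.map_apply]

lemma iterMatC_eq (Bs : Fin d → Matrix (Fin n) (Fin n) ℝ) :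
    iterMatC Bs = (1 - (blockL Bs).map Complex.ofReal)⁻¹ * (blockU Bs).map Complex.ofReal := by
  have hdet : IsUnit (1 - blockL Bs).det :=
    ((Matrix.isUnit_iff_isUnit_det _).1 (isUnit_one_sub_blockL Bs))
  have h1 : (1 - blockL Bs) * (1 - blockL Bs)⁻¹ = 1 := Matrix.mul_nonsing_inv _ hdet
  have h2 : ((1 - blockL Bs) * (1 - blockL Bs)⁻¹).map Complex.ofReal = (1 : Matrix (Fin d × Fin n) (Fin d × Fin n) ℂ) := by
    rw [h1]
    exact Matrix.map_one _ Complex.ofReal_zero Complex.ofReal_one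
  rw [show Complex.ofReal = ⇑Complex.ofRealHom from rfl, Matrix.map_mul] at h2
  rw [show ⇑Complex.ofRealHom = Complex.ofReal from rfl] at h2
  have h3 : (1 - blockL Bs).map Complex.ofReal
      = 1 - (blockL Bs).map Complex.ofReal := by
    rw [Matrix.map_sub Complex.ofReal (by push_cast; intros; ring)]
    rw [Matrix.map_one _ Complex.ofReal_zero Complex.ofReal_one]
  rw [h3] at h2
  have h4 : (1 - (blockL Bs).map Complex.ofReal)⁻¹ = ((1 - blockL Bs)⁻¹).map Complex.ofReal :=
    Matrix.inv_eq_right_inv h2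
  rw [h4, iterMatC, iterMat, show Complex.ofReal = ⇑Complex.ofRealHom from rfl, Matrix.map_mul]

lemma mem_spectrum_iff_eigen {m : Type*} [Fintype m] [DecidableEq m]
    (M : Matrix m m ℂ) (l : ℂ) :
    l ∈ spectrum ℂ M ↔ ∃ v, v ≠ 0 ∧ M *ᵥ v = l • v := by
  rw [spectrum.mem_iff, Algebra.algebraMap_eq_smul_one]
  rw [Matrix.isUnit_iff_isUnit_det, isUnit_iff_ne_zero, not_ne_iff]
  rw [← Matrix.exists_mulVec_eq_zero_iff]
  constructor
  · rintro ⟨v, hv, h⟩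
    refine ⟨v, hv, ?_⟩
    rw [Matrix.sub_mulVec, Matrix.smul_mulVec, Matrix.one_mulVec, sub_eq_zero] at h
    exact h.symm
  · rintro ⟨v, hv, h⟩
    refine ⟨v, hv, ?_⟩
    rw [Matrix.sub_mulVec, Matrix.smul_mulVec, Matrix.one_mulVec, sub_eq_zero, h]

end Aux

section Decode
open Finset

variable {n d : ℕ}

/-- Block components of a vector on `Fin d × Fin n`, padded by `0`. -/
def dA {n d : ℕ} (α : Fin d × Fin n → ℂ) (k : ℕ) : Fin n → ℂ :=
  if h : k < d then (fun i => α (⟨k, h⟩, i)) else 0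

lemma LC_mulVec_apply (Bs : Fin d → Matrix (Fin n) (Fin n) ℝ) (α : Fin d × Fin n → ℂ)
    (p : Fin d) (i : Fin n) :
    ((blockL Bs).map Complex.ofReal *ᵥ α) (p, i)
      = (∑ j ∈ range p.val, padC Bs j *ᵥ dA α j) i := by
  have h0 : ((blockL Bs).map Complex.ofReal *ᵥ α) (p, i)
      = ∑ q : Fin d, ∑ j : Fin n, (if q < p then ((Bs q i j : ℝ) : ℂ) else 0) * α (q, j) := by
    rw [mulVec, dotProduct, Fintype.sum_prod_type]
    congr 1; funext q; congr 1; funext j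
    simp [blockL, Matrix.map_apply, apply_ite Complex.ofReal]
  have hq : ∀ q : Fin d, (∑ j : Fin n, (if q < p then ((Bs q i j : ℝ) : ℂ) else 0) * α (q, j))
      = (fun m => if m < p.val then (padC Bs m *ᵥ dA α m) i else 0) q.val := by
    intro q
    by_cases hqp : q < p
    · simp only [if_pos hqp, if_pos (Fin.lt_def.mp hqp)]
      rw [padC, dA]
      rw [dif_pos q.isLt, dif_pos q.isLt]
      simp [mulVec, dotProduct, Matrix.map_apply]
    · have : ¬ (q.val < p.val) := fun h => hqp (Fin.lt_def.mpr h)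
      simp [if_neg hqp, if_neg this]
  rw [h0]
  rw [Finset.sum_congr rfl (fun q _ => hq q)]
  rw [Fin.sum_univ_eq_sum_range (fun m => if m < p.val then (padC Bs m *ᵥ dA α m) i else 0) d]
  rw [← Finset.sum_subset (Finset.range_subset_range.mpr p.isLt.le)
    (fun x _ hx => if_neg (fun hc => hx (Finset.mem_range.mpr hc)))]
  rw [Finset.sum_apply]
  exact Finset.sum_congr rfl fun m hm => if_pos (Finset.mem_range.mp hm)

lemma UC_mulVec_apply (Bs : Fin d → Matrix (Fin n) (Fin n) ℝ) (α : Fin d × Fin n → ℂ)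
    (p : Fin d) (i : Fin n) :
    ((blockU Bs).map Complex.ofReal *ᵥ α) (p, i)
      = (∑ j ∈ Finset.Ico p.val d, padC Bs j *ᵥ dA α j) i := by
  have h0 : ((blockU Bs).map Complex.ofReal *ᵥ α) (p, i)
      = ∑ q : Fin d, ∑ j : Fin n, (if p ≤ q then ((Bs q i j : ℝ) : ℂ) else 0) * α (q, j) := by
    rw [mulVec, dotProduct, Fintype.sum_prod_type]
    congr 1; funext q; congr 1; funext j
    simp [blockU, Matrix.map_apply, apply_ite Complex.ofReal]
  have hq : ∀ q : Fin d, (∑ j : Fin n, (if p ≤ q then ((Bs q i j : ℝ) : ℂ) else 0) * α (q, j))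
      = (fun m => if p.val ≤ m then (padC Bs m *ᵥ dA α m) i else 0) q.val := by
    intro q
    by_cases hqp : p ≤ q
    · simp only [if_pos hqp, if_pos (Fin.le_def.mp hqp)]
      rw [padC, dA]
      rw [dif_pos q.isLt, dif_pos q.isLt]
      simp [mulVec, dotProduct, Matrix.map_apply]
    · have : ¬ (p.val ≤ q.val) := fun h => hqp (Fin.le_def.mpr h)
      simp [if_neg hqp, if_neg this]
  rw [h0]
  rw [Finset.sum_congr rfl (fun q _ => hq q)]
  rw [Fin.sum_univ_eq_sum_range (fun m => if p.val ≤ m then (padC Bs m *ᵥ dA α m) i else 0) d]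
  rw [← Finset.sum_subset (fun x hx => Finset.mem_range.mpr (Finset.mem_Ico.mp hx).2)
    (fun x hx hx' => if_neg (fun hc => hx' (Finset.mem_Ico.mpr ⟨hc, Finset.mem_range.mp hx⟩)))]
  rw [Finset.sum_apply]
  exact Finset.sum_congr rfl fun m hm => if_pos (Finset.mem_Ico.mp hm).1

lemma kernel_iff_sysPt (Bs : Fin d → Matrix (Fin n) (Fin n) ℝ) (lam : ℂ)
    (α : Fin d × Fin n → ℂ) :
    ((lam • (1 - (blockL Bs).map Complex.ofReal) - (blockU Bs).map Complex.ofReal) *ᵥ α = 0)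
      ↔ SysSol lam (padC Bs) d (dA α) := by
  rw [funext_iff]
  rw [Prod.forall]
  constructor
  · intro h k hk
    funext i
    have hpt := h ⟨k, hk⟩ i
    rw [Matrix.sub_mulVec, Matrix.smul_mulVec, Matrix.sub_mulVec, Matrix.one_mulVec] at hpt
    simp only [Pi.sub_apply, Pi.smul_apply, Pi.zero_apply, smul_eq_mul] at hpt
    rw [LC_mulVec_apply, UC_mulVec_apply] at hpt
    have hα : α (⟨k, hk⟩, i) = dA α k i := by rw [dA, dif_pos hk]
    simp only [Pi.add_apply, Pi.smul_apply, Finset.sum_apply, smul_eq_mul]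
    rw [← hα]
    have h2 := sub_eq_zero.mp hpt
    simp only [Finset.sum_apply, Fin.val_mk] at h2 ⊢
    linear_combination h2
  · intro h p i
    have hpt := congrFun (h p.val p.isLt) i
    rw [Matrix.sub_mulVec, Matrix.smul_mulVec, Matrix.sub_mulVec, Matrix.one_mulVec]
    simp only [Pi.sub_apply, Pi.smul_apply, Pi.zero_apply, smul_eq_mul]
    rw [LC_mulVec_apply, UC_mulVec_apply]
    have hα : α (p, i) = dA α p.val i := by
      rw [dA, dif_pos p.isLt]
    simp only [Pi.add_apply, Pi.smul_apply, Finset.sum_apply, smul_eq_mul] at hpt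
    rw [hα]
    simp only [Finset.sum_apply] at hpt ⊢
    linear_combination hpt

end Decode

section Sys
open Finset

variable {n d : ℕ}

lemma sysE_succ_iff (lam μ : ℂ) (hμ : lam * μ = lam - 1)
    (C : ℕ → Matrix (Fin n) (Fin n) ℂ) (a : ℕ → Fin n → ℂ) (k : ℕ) (hk : k < d)
    (hrec : a (k + 1) = a k + μ • (C k *ᵥ a k)) :
    (lam • a k = lam • ∑ j ∈ range k, C j *ᵥ a j + ∑ j ∈ Ico k d, C j *ᵥ a j)
      ↔ (lam • a (k + 1) =
          lam • ∑ j ∈ range (k + 1), C j *ᵥ a j + ∑ j ∈ Ico (k + 1) d, C j *ᵥ a j) := by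
  rw [Finset.range_add_one, Finset.sum_insert Finset.notMem_range_self,
      ← Finset.insert_Ico_add_one_left_eq_Ico hk,
      Finset.sum_insert (by simp [Finset.mem_Ico]), hrec]
  have key : lam • (a k + μ • (C k *ᵥ a k))
        - (lam • ((C k *ᵥ a k) + ∑ j ∈ range k, C j *ᵥ a j) + ∑ j ∈ Ico (k + 1) d, C j *ᵥ a j)
      = lam • a k
        - (lam • ∑ j ∈ range k, C j *ᵥ a j + ((C k *ᵥ a k) + ∑ j ∈ Ico (k + 1) d, C j *ᵥ a j)) := by
    rw [smul_add, smul_add, smul_smul, hμ]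
    module
  constructor
  · intro h
    rw [← sub_eq_zero, key, sub_eq_zero]
    exact h
  · intro h
    rw [← sub_eq_zero, ← key, sub_eq_zero]
    exact h

lemma sysSol_rec (lam μ : ℂ) (hl : lam ≠ 0) (hμ : lam * μ = lam - 1)
    (C : ℕ → Matrix (Fin n) (Fin n) ℂ) (a : ℕ → Fin n → ℂ)
    (hsys : SysSol lam C d a) (k : ℕ) (hk1 : k + 1 < d) :
    a (k + 1) = a k + μ • (C k *ᵥ a k) := by
  have hk : k < d := by omega
  have hE1 := hsys k hk
  have hE2 := hsys (k + 1) hk1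
  rw [Finset.range_add_one, Finset.sum_insert Finset.notMem_range_self] at hE2
  rw [← Finset.insert_Ico_add_one_left_eq_Ico hk, Finset.sum_insert (by simp [Finset.mem_Ico])] at hE1
  have h3 : lam • a (k + 1) = lam • (a k + μ • (C k *ᵥ a k)) := by
    rw [hE2, smul_add, smul_add, smul_smul, hμ, hE1]
    module
  exact smul_right_injective _ hl h3

lemma sys_iff_eigen (hd0 : 0 < d) (lam : ℂ) (hl : lam ≠ 0)
    (C : ℕ → Matrix (Fin n) (Fin n) ℂ) :
    (∃ a : ℕ → Fin n → ℂ, (∃ k < d, a k ≠ 0) ∧ SysSol lam C d a)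
      ↔ ∃ x, x ≠ 0 ∧ Tm ((lam - 1) / lam) C d *ᵥ x = lam • x := by
  set μ := (lam - 1) / lam with hμdef
  have hμ : lam * μ = lam - 1 := by
    rw [hμdef, mul_div_assoc', mul_div_cancel_left₀ _ hl]
  constructor
  · rintro ⟨a, ⟨k0, hk0, hk0ne⟩, hsys⟩
    have hQ : ∀ k, k < d → a k = Qm μ C k *ᵥ a 0 := by
      intro k
      induction k with
      | zero => intro _; simp [Qm, Matrix.one_mulVec]
      | succ k ih =>
        intro hk1
        have hk : k < d := by omega
        have hrec := sysSol_rec lam μ hl hμ C a hsys k hk1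
        rw [hrec, ih hk]
        show _ = Qm μ C (k + 1) *ᵥ a 0
        rw [Qm, ← Matrix.mulVec_mulVec, Matrix.add_mulVec, Matrix.one_mulVec,
          Matrix.smul_mulVec]
    refine ⟨a 0, ?_, ?_⟩
    · intro h0
      apply hk0ne
      rw [hQ k0 hk0, h0, Matrix.mulVec_zero]
    · have hE0 := hsys 0 hd0
      rw [Finset.range_zero, Finset.sum_empty, smul_zero, zero_add, Nat.Ico_zero_eq_range] at hE0
      rw [Finset.sum_congr rfl
        (fun j hj => by
          rw [hQ j (Finset.mem_range.mp hj), Matrix.mulVec_mulVec])] at hE0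
      rw [Tm, _root_.sum_mulVec]
      exact hE0.symm
  · rintro ⟨x, hx, hTx⟩
    refine ⟨fun k => Qm μ C k *ᵥ x, ⟨0, hd0, by simpa [Qm, Matrix.one_mulVec] using hx⟩, ?_⟩
    have hrec : ∀ k, Qm μ C (k + 1) *ᵥ x
        = Qm μ C k *ᵥ x + μ • (C k *ᵥ (Qm μ C k *ᵥ x)) := by
      intro k
      rw [Qm, ← Matrix.mulVec_mulVec, Matrix.add_mulVec, Matrix.one_mulVec,
        Matrix.smul_mulVec]
    have hE0 : lam • (Qm μ C 0 *ᵥ x)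
        = lam • ∑ j ∈ range 0, C j *ᵥ (Qm μ C j *ᵥ x)
          + ∑ j ∈ Ico 0 d, C j *ᵥ (Qm μ C j *ᵥ x) := by
      rw [Finset.range_zero, Finset.sum_empty, smul_zero, zero_add, Nat.Ico_zero_eq_range]
      rw [Finset.sum_congr rfl (fun j hj => Matrix.mulVec_mulVec x (C j) (Qm μ C j))]
      rw [← _root_.sum_mulVec, ← Tm, hTx]
      show lam • ((1 : Matrix (Fin n) (Fin n) ℂ) *ᵥ x) = _
      rw [Matrix.one_mulVec]
    intro k
    induction k with
    | zero => intro _; exact hE0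
    | succ k ih =>
      intro hk1
      have hk : k < d := by omega
      exact (sysE_succ_iff lam μ hμ C (fun k => Qm μ C k *ᵥ x) k hk (hrec k)).mp (ih hk)

end Sys

section SpecA
open Finset

variable {n d : ℕ}

lemma sysSol_congr (lam : ℂ) (C : ℕ → Matrix (Fin n) (Fin n) ℂ) (a b : ℕ → Fin n → ℂ)
    (h : ∀ k < d, a k = b k) : SysSol lam C d a ↔ SysSol lam C d b := by
  have key : ∀ (a b : ℕ → Fin n → ℂ), (∀ k < d, a k = b k) →
      SysSol lam C d a → SysSol lam C d b := by
    intro a b h hs k hk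
    have h1 : ∑ j ∈ range k, C j *ᵥ b j = ∑ j ∈ range k, C j *ᵥ a j :=
      Finset.sum_congr rfl (fun j hj => by
        rw [h j (lt_trans (Finset.mem_range.mp hj) hk)])
    have h2 : ∑ j ∈ Ico k d, C j *ᵥ b j = ∑ j ∈ Ico k d, C j *ᵥ a j :=
      Finset.sum_congr rfl (fun j hj => by rw [h j (Finset.mem_Ico.mp hj).2])
    rw [h1, h2, ← h k hk]
    exact hs k hk
  exact ⟨key a b h, key b a (fun k hk => (h k hk).symm)⟩

lemma kernel_exists_iff_sys (Bs : Fin d → Matrix (Fin n) (Fin n) ℝ) (lam : ℂ) :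
    (∃ α : Fin d × Fin n → ℂ, α ≠ 0 ∧
        (lam • (1 - (blockL Bs).map Complex.ofReal) - (blockU Bs).map Complex.ofReal) *ᵥ α = 0)
      ↔ ∃ a : ℕ → Fin n → ℂ, (∃ k < d, a k ≠ 0) ∧ SysSol lam (padC Bs) d a := by
  constructor
  · rintro ⟨α, hα, h⟩
    refine ⟨dA α, ?_, (kernel_iff_sysPt Bs lam α).mp h⟩
    have hex : ∃ pi, α pi ≠ 0 := by
      by_contra hc
      push_neg at hc
      exact hα (funext fun pi => hc pi)
    obtain ⟨⟨p, i⟩, hpi⟩ := hex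
    refine ⟨p.val, p.isLt, fun h0 => hpi ?_⟩
    have h1 := congrFun h0 i
    rw [dA, dif_pos p.isLt] at h1
    simpa using h1
  · rintro ⟨a, ⟨k0, hk0, hk0ne⟩, hsys⟩
    refine ⟨fun pi => a pi.1.val pi.2, ?_, ?_⟩
    · intro h0
      apply hk0ne
      funext i
      have := congrFun h0 (⟨k0, hk0⟩, i)
      simpa using this
    · rw [kernel_iff_sysPt]
      rw [sysSol_congr lam (padC Bs) _ a
        (fun k hk => by rw [dA, dif_pos hk])]
      exact hsys

lemma specA (hd0 : 0 < d) (Bs : Fin d → Matrix (Fin n) (Fin n) ℝ) (lam : ℂ) (hl : lam ≠ 0) :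
    lam ∈ spectrum ℂ (iterMatC Bs)
      ↔ lam ∈ spectrum ℂ (Tm ((lam - 1) / lam) (padC Bs) d) := by
  rw [mem_spectrum_iff_eigen (Tm ((lam - 1) / lam) (padC Bs) d) lam,
    ← sys_iff_eigen hd0 lam hl, ← kernel_exists_iff_sys]
  rw [spectrum.mem_iff, Algebra.algebraMap_eq_smul_one]
  set LC := (blockL Bs).map Complex.ofReal with hLC
  set UC := (blockU Bs).map Complex.ofReal with hUC
  have hU : IsUnit (1 - LC) := isUnit_one_sub_blockLC Bs
  have hfac : lam • (1 : Matrix (Fin d × Fin n) (Fin d × Fin n) ℂ) - iterMatC Bs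
      = (1 - LC)⁻¹ * (lam • (1 - LC) - UC) := by
    rw [iterMatC_eq Bs, Matrix.mul_sub]
    congr 1
    rw [mul_smul_comm, Matrix.nonsing_inv_mul _ ((Matrix.isUnit_iff_isUnit_det _).mp hU)]
  rw [hfac]
  have hu : (1 - LC)⁻¹ = ((hU.unit⁻¹ : (Matrix (Fin d × Fin n) (Fin d × Fin n) ℂ)ˣ)
      : Matrix (Fin d × Fin n) (Fin d × Fin n) ℂ) := by
    rw [Matrix.coe_units_inv, hU.unit_spec]
  rw [hu, Units.isUnit_units_mul]
  rw [Matrix.isUnit_iff_isUnit_det, isUnit_iff_ne_zero, not_ne_iff,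
    ← Matrix.exists_mulVec_eq_zero_iff]

end SpecA

section Refine
open Finset

variable {n : ℕ}

lemma refAux0 {d m : ℕ} (hp : m < d - 1) : m < d := by omega
lemma refAux1 {d : ℕ} (hd : 1 ≤ d) : d - 1 < d + 1 := by omega
lemma refAux3 {d : ℕ} (hd : 1 ≤ d) : d - 1 < d := by omega

lemma Tm_refinement_eq {d : ℕ} (hd : 1 ≤ d) (μ : ℂ)
    (Bs : Fin d → Matrix (Fin n) (Fin n) ℝ) (Bs' : Fin (d + 1) → Matrix (Fin n) (Fin n) ℝ)
    (hI : ∀ p : Fin (d + 1), (hp : p.val < d - 1) →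
      Bs' p = Bs ⟨p.val, refAux0 hp⟩)
    (hII : Bs' ⟨d - 1, refAux1 hd⟩ + Bs' ⟨d, Nat.lt_add_one d⟩ = Bs ⟨d - 1, refAux3 hd⟩)
    (hIII : Bs' ⟨d, Nat.lt_add_one d⟩ * Bs' ⟨d - 1, refAux1 hd⟩ = 0) :
    Tm μ (padC Bs') (d + 1) = Tm μ (padC Bs) d := by
  obtain ⟨e, rfl⟩ : ∃ e, d = e + 1 := ⟨d - 1, by omega⟩
  have hC : ∀ k, k < e → padC Bs' k = padC Bs k := by
    intro k hk
    rw [padC, padC, dif_pos (show k < e + 1 + 1 by omega), dif_pos (show k < e + 1 by omega)]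
    have := hI ⟨k, by omega⟩ (show k < e + 1 - 1 by omega)
    rw [this]
  have hQ : ∀ k, k ≤ e → Qm μ (padC Bs') k = Qm μ (padC Bs) k := by
    intro k hk
    induction k with
    | zero => rfl
    | succ k ih => rw [Qm, Qm, hC k (by omega), ih (by omega)]
  have hCe : padC Bs' e + padC Bs' (e + 1) = padC Bs e := by
    rw [padC, padC, padC, dif_pos (show e < e + 1 + 1 by omega),
      dif_pos (show e + 1 < e + 1 + 1 by omega), dif_pos (show e < e + 1 by omega)]
    rw [← Matrix.map_add Complex.ofReal (by intro a b; push_cast; ring)]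
    have h2 : (⟨e + 1 - 1, by omega⟩ : Fin (e + 1 + 1)) = ⟨e, by omega⟩ := by
      ext; simp
    have h3 : (⟨e + 1 - 1, by omega⟩ : Fin (e + 1)) = ⟨e, by omega⟩ := by
      ext; simp
    rw [← h2, ← h3, hII]
  have hCp : padC Bs' (e + 1) * padC Bs' e = 0 := by
    rw [padC, padC, dif_pos (show e < e + 1 + 1 by omega),
      dif_pos (show e + 1 < e + 1 + 1 by omega)]
    rw [show Complex.ofReal = ⇑Complex.ofRealHom from rfl, ← Matrix.map_mul]
    have h2 : (⟨e + 1 - 1, by omega⟩ : Fin (e + 1 + 1)) = ⟨e, by omega⟩ := by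
      ext; simp
    rw [← h2, hIII]
    ext i j
    simp
  rw [Tm, Tm, Finset.sum_range_succ, Finset.sum_range_succ, Finset.sum_range_succ]
  rw [Finset.sum_congr rfl (fun k hk => by
    rw [hC k (Finset.mem_range.mp hk), hQ k (le_of_lt (Finset.mem_range.mp hk))])]
  rw [hQ e le_rfl]
  rw [show Qm μ (padC Bs') (e + 1) = (1 + μ • padC Bs' e) * Qm μ (padC Bs) e by
    rw [Qm, hQ e le_rfl]]
  rw [add_assoc]
  congr 1
  have expand : (1 + μ • padC Bs' e) * Qm μ (padC Bs) e
      = Qm μ (padC Bs) e + μ • (padC Bs' e * Qm μ (padC Bs) e) := by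
    rw [add_mul, one_mul, smul_mul_assoc]
  rw [expand, mul_add]
  have hz : padC Bs' (e + 1) * (μ • (padC Bs' e * Qm μ (padC Bs) e)) = 0 := by
    rw [mul_smul_comm, ← mul_assoc, hCp, zero_mul, smul_zero]
  rw [hz, add_zero, ← add_mul, hCe]

end Refine

/-- If a refinement step splits the last part `B_d` into `B'_d + B'_{d+1}` with
`B'_{d+1} B'_d = O`, then the two iteration matrices have exactly the same
nonzero eigenvalues. -/
theorem refinement_product_zero_spectrum_equivalent (n d : ℕ) (hd : 1 ≤ d)
    (BJ : Matrix (Fin n) (Fin n) ℝ)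
    (Bs : Fin d → Matrix (Fin n) (Fin n) ℝ)
    (Bs' : Fin (d + 1) → Matrix (Fin n) (Fin n) ℝ)
    (hS : IsSplitting BJ Bs) (hS' : IsSplitting BJ Bs')
    (hI : ∀ p : Fin (d + 1), (hp : p.val < d - 1) →
      Bs' p = Bs ⟨p.val, lt_of_lt_of_le hp (Nat.sub_le d 1)⟩)
    (hII : Bs' ⟨d - 1, by omega⟩ + Bs' ⟨d, by omega⟩ = Bs ⟨d - 1, by omega⟩)
    (hIII : Bs' ⟨d, by omega⟩ * Bs' ⟨d - 1, by omega⟩ = 0) :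
    ∀ lam : ℂ, lam ≠ 0 →
      (lam ∈ spectrum ℂ (iterMatC Bs) ↔ lam ∈ spectrum ℂ (iterMatC Bs')) := by
  intro lam hl
  rw [specA hd Bs lam hl, specA (Nat.succ_pos d) Bs' lam hl,
    Tm_refinement_eq hd ((lam - 1) / lam) Bs Bs' hI hII hIII]
end
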